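/- arXiv:1712.01188 — 3 statements merged into one kernel-verified Lean document; each statement's English description precedes it below -/
import Mathlib

section
/- Let n ≥ 3, let Ω ⊆ ℝ^n be a measurable set, let f ∈ L^n(Ω), and let (f_m) be a sequence in L^n(Ω) converging to f in the L^n norm. Then for every ε > 0 there exists a strictly increasing sequence of indices (k_m) such that r_{f_{k_m}}(ε) ≤ 2·r_f(ε/3) for all m ∈ ℕ. -/
open MeasureTheory ENNReal Filter

/-- `R_f(t) = ‖ f·1_{|f|>t} ‖_{Lⁿ(Ω)}`. -/
noncomputable def Rquant (n : ℕ) (Ω : Set (EuclideanSpace ℝ (Fin n)))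
    (f : EuclideanSpace ℝ (Fin n) → ℝ) (t : ℝ) : ℝ≥0∞ :=
  eLpNorm (fun x => if t < |f x| then f x else 0) n (volume.restrict Ω)

/-- `r_f(ε) = inf { t > 0 : R_f(t) < ε }`. -/
noncomputable def rquant (n : ℕ) (Ω : Set (EuclideanSpace ℝ (Fin n)))
    (f : EuclideanSpace ℝ (Fin n) → ℝ) (ε : ℝ) : ℝ :=
  sInf {t : ℝ | 0 < t ∧ Rquant n Ω f t < ENNReal.ofReal ε}

/-!
The threshold `2t` works for `f_m` as soon as `t` works for `f` with `ε/3` and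
`‖f_m - f‖ < ε/3`: pointwise, where `|f_m| > 2t` either `|f| > t`, or `|f| ≤ t` and then
`|f_m| < 2 |f_m - f|`. Hence `R_{f_m}(2t) ≤ R_f(t) + 2 ‖f_m - f‖ < ε`, and the set of
admissible thresholds of `f_m` contains twice that of `f`, which is nonempty because
`f ∈ Lⁿ`. The subsequence is any tail of the sequence.
-/

section TailAbove

variable {X : Type*}

noncomputable def tailAbove (f : X → ℝ) (t : ℝ) : X → ℝ :=
  fun x => if t < |f x| then f x else 0

lemma abs_tailAbove_two_mul_le (f g : X → ℝ) (t : ℝ) (x : X) :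
    |tailAbove g (2 * t) x| ≤ |tailAbove f t x| + 2 * |g x - f x| := by
  have hgf : |g x| ≤ |f x| + |g x - f x| := by
    simpa using abs_add_le (f x) (g x - f x)
  unfold tailAbove
  split_ifs <;> linarith [abs_nonneg (f x), abs_nonneg (g x - f x), abs_zero (α := ℝ)]

variable [MeasurableSpace X] {μ : Measure X}

lemma MeasureTheory.AEStronglyMeasurable.tailAbove {f : X → ℝ} (hf : AEStronglyMeasurable f μ)
    (t : ℝ) :
    AEStronglyMeasurable (tailAbove f t) μ := by
  refine ⟨_root_.tailAbove (hf.mk f) t, ?_, ?_⟩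
  · exact (Measurable.ite (measurableSet_lt measurable_const hf.measurable_mk.abs)
      hf.measurable_mk measurable_const).stronglyMeasurable
  · filter_upwards [hf.ae_eq_mk] with x hx
    simp only [_root_.tailAbove, hx]

lemma eLpNorm_tailAbove_two_mul_le {p : ℝ≥0∞} (hp : 1 ≤ p) {f g : X → ℝ}
    (hf : AEStronglyMeasurable f μ) (hg : AEStronglyMeasurable g μ) (t : ℝ) :
    eLpNorm (tailAbove g (2 * t)) p μ ≤
      eLpNorm (tailAbove f t) p μ + 2 * eLpNorm (g - f) p μ :=
  calc eLpNorm (tailAbove g (2 * t)) p μ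
      ≤ eLpNorm (fun x => |tailAbove f t x| + 2 * |g x - f x|) p μ :=
        eLpNorm_mono_real fun x => by
          simpa only [Real.norm_eq_abs] using abs_tailAbove_two_mul_le f g t x
    _ ≤ eLpNorm (fun x => |tailAbove f t x|) p μ + eLpNorm (fun x => 2 * |g x - f x|) p μ :=
        eLpNorm_add_le (hf.tailAbove t).norm ((hg.sub hf).norm.const_mul 2) hp
    _ = eLpNorm (tailAbove f t) p μ + 2 * eLpNorm (g - f) p μ := by
        rw [show (fun x => 2 * |g x - f x|) = (2 : ℝ) • fun x => ‖(g - f) x‖ from rfl,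
          eLpNorm_const_smul]
        simp only [← Real.norm_eq_abs, eLpNorm_norm, Real.enorm_eq_ofReal_abs]
        norm_num

lemma MeasureTheory.MemLp.exists_eLpNorm_tailAbove_lt {p : ℝ≥0∞} {f : X → ℝ}
    (hf : MemLp f p μ) {δ : ℝ} (hδ : 0 < δ) :
    ∃ t, 0 < t ∧ eLpNorm (tailAbove f t) p μ < ENNReal.ofReal δ := by
  obtain ⟨t, ht, hle⟩ := (hf.ae_eq hf.1.ae_eq_mk).eLpNorm_indicator_norm_ge_pos_le
    hf.1.stronglyMeasurable_mk (half_pos hδ)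
  refine ⟨t, ht, lt_of_le_of_lt ?_ (ofReal_lt_ofReal_iff hδ |>.2 (half_lt_self hδ))⟩
  calc eLpNorm (tailAbove f t) p μ = eLpNorm (tailAbove (hf.1.mk f) t) p μ := by
        refine eLpNorm_congr_ae ?_
        filter_upwards [hf.1.ae_eq_mk] with x hx
        simp only [tailAbove, hx]
    _ ≤ eLpNorm ({x | t ≤ ‖hf.1.mk f x‖₊}.indicator (hf.1.mk f)) p μ := by
        refine eLpNorm_mono fun x => ?_
        by_cases h : t < |hf.1.mk f x|
        · simp [tailAbove, h, h.le]
        · simp [tailAbove, h]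
    _ ≤ _ := hle

end TailAbove

lemma Real.sInf_le_mul_sInf {S T : Set ℝ} {c : ℝ} (hc : 0 ≤ c) (hS : S.Nonempty)
    (hT : BddBelow T) (hST : ∀ t ∈ S, c * t ∈ T) : sInf T ≤ c * sInf S := by
  rw [← smul_eq_mul, ← Real.sInf_smul_of_nonneg hc]
  exact csInf_le_csInf hT hS.smul_set (by rintro _ ⟨t, ht, rfl⟩; exact hST t ht)

theorem rquant_subsequence_general (n : ℕ) (hn : 3 ≤ n)
    (Ω : Set (EuclideanSpace ℝ (Fin n)))
    (f : EuclideanSpace ℝ (Fin n) → ℝ)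
    (hf : MemLp f n (volume.restrict Ω))
    (fm : ℕ → EuclideanSpace ℝ (Fin n) → ℝ)
    (hfm : ∀ m, MemLp (fm m) n (volume.restrict Ω))
    (hconv : Tendsto (fun m => eLpNorm (fun x => fm m x - f x) n (volume.restrict Ω))
      atTop (nhds 0))
    (ε : ℝ) (hε : 0 < ε) :
    ∃ k : ℕ → ℕ, StrictMono k ∧
      ∀ m : ℕ, rquant n Ω (fm (k m)) ε ≤ 2 * rquant n Ω f (ε / 3) := by
  have hp : (1 : ℝ≥0∞) ≤ n := by exact_mod_cast (by omega : 1 ≤ n)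
  have hε3 : 0 < ε / 3 := by positivity
  obtain ⟨N, hN⟩ := eventually_atTop.mp (hconv.eventually_lt_const (ofReal_pos.2 hε3))
  refine ⟨(N + ·), strictMono_id.const_add N, fun m => ?_⟩
  refine Real.sInf_le_mul_sInf zero_le_two (hf.exists_eLpNorm_tailAbove_lt hε3)
    ⟨0, fun _ h => h.1.le⟩ fun t ⟨ht, hft⟩ => ⟨by positivity, ?_⟩
  calc Rquant n Ω (fm (N + m)) (2 * t)
      ≤ Rquant n Ω f t + 2 * eLpNorm (fm (N + m) - f) n (volume.restrict Ω) :=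
        eLpNorm_tailAbove_two_mul_le hp hf.1 (hfm _).1 t
    _ < ENNReal.ofReal (ε / 3) + 2 * ENNReal.ofReal (ε / 3) :=
        ENNReal.add_lt_add hft (ENNReal.mul_lt_mul_right (by norm_num) (by norm_num)
          (hN _ (Nat.le_add_right N m)))
    _ = ENNReal.ofReal ε := by
        rw [← one_add_mul, show (1 + 2 : ℝ≥0∞) = ENNReal.ofReal 3 by norm_num,
          ← ofReal_mul (by norm_num), mul_div_cancel₀ ε three_ne_zero]

/-- Let `n ≥ 3`, `Ω ⊆ ℝⁿ` measurable, `f ∈ Lⁿ(Ω)` and `(f_m)` a sequence in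
`Lⁿ(Ω)` converging to `f` in `Lⁿ`. Then for every `ε > 0` there is a strictly increasing
sequence of indices `(k_m)` such that `r_{f_{k_m}}(ε) ≤ 2 · r_f(ε/3)` for all `m`. -/
theorem rquant_subsequence (n : ℕ) (hn : 3 ≤ n)
    (Ω : Set (EuclideanSpace ℝ (Fin n))) (hΩ : MeasurableSet Ω)
    (f : EuclideanSpace ℝ (Fin n) → ℝ)
    (hf : MemLp f n (volume.restrict Ω))
    (fm : ℕ → EuclideanSpace ℝ (Fin n) → ℝ)
    (hfm : ∀ m, MemLp (fm m) n (volume.restrict Ω))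
    (hconv : Tendsto (fun m => eLpNorm (fun x => fm m x - f x) n (volume.restrict Ω))
      atTop (nhds 0))
    (ε : ℝ) (hε : 0 < ε) :
    ∃ k : ℕ → ℕ, StrictMono k ∧
      ∀ m : ℕ, rquant n Ω (fm (k m)) ε ≤ 2 * rquant n Ω f (ε / 3) :=
  rquant_subsequence_general n hn Ω f hf fm hfm hconv ε hε
end

section
/- Suppose a > 0, c₁ > 0, and f : [a,∞) → [0,∞) is non-increasing and satisfies f(2t) ≤ c₁/t + (1/3)·f(t) for all t ≥ a. Then f(t) ≤ C/t for all t ≥ a, where C = 6c₁ + 2a·f(a). -/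
/-- If `a > 0`, `c₁ > 0`, and `f : [a,∞) → [0,∞)` is non-increasing and
satisfies `f(2t) ≤ c₁/t + (1/3)·f(t)` for all `t ≥ a`, then `f(t) ≤ C/t` for all `t ≥ a`,
where `C = 6c₁ + 2a·f(a)`. -/
theorem decay_bound (a c₁ : ℝ) (ha : 0 < a) (hc₁ : 0 < c₁) (f : ℝ → ℝ)
    (hnonneg : ∀ t, a ≤ t → 0 ≤ f t)
    (hmono : AntitoneOn f (Set.Ici a))
    (hrec : ∀ t, a ≤ t → f (2 * t) ≤ c₁ / t + (1 / 3) * f t) :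
    ∀ t, a ≤ t → f t ≤ (6 * c₁ + 2 * a * f a) / t := by
  have hfa : 0 ≤ f a := hnonneg a le_rfl
  set C := 6 * c₁ + 2 * a * f a with hC
  have key : ∀ n : ℕ, ∀ t, a ≤ t → t ≤ 2 ^ n * a → f t ≤ C / t := by
    intro n
    induction n with
    | zero =>
      intro t ht1 ht2
      have hta : t = a := le_antisymm (by simpa using ht2) ht1
      subst hta
      rw [le_div_iff₀ ha]
      nlinarith
    | succ n ih =>
      intro t ht1 ht2
      have htpos : 0 < t := lt_of_lt_of_le ha ht1
      by_cases h2a : t ≤ 2 * a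
      · have hft : f t ≤ f a := hmono (Set.self_mem_Ici) ht1 ht1
        rw [le_div_iff₀ htpos]
        nlinarith [mul_le_mul_of_nonneg_left h2a hfa]
      · have hta : a ≤ t / 2 := by linarith
        have ht2' : t / 2 ≤ 2 ^ n * a := by
          rw [pow_succ] at ht2; linarith
        have h1 := ih (t / 2) hta ht2'
        have h2 := hrec (t / 2) hta
        rw [show 2 * (t / 2) = t by ring] at h2
        rw [le_div_iff₀ (by linarith : (0:ℝ) < t / 2)] at h1
        have hc : c₁ / (t / 2) = 2 * c₁ / t := by
          field_simp
        rw [hc] at h2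
        rw [le_div_iff₀ htpos]
        have h3 : (2 * c₁ / t) * t = 2 * c₁ := by field_simp
        have h4 := mul_le_mul_of_nonneg_right h2 htpos.le
        nlinarith [hnonneg (t / 2) hta]
    done
  intro t ht
  obtain ⟨n, hn⟩ := pow_unbounded_of_one_lt (t / a) (by norm_num : (1:ℝ) < 2)
  exact key n t ht (by rw [div_lt_iff₀ ha] at hn; linarith)
end

section
/- Let β ≥ 1 and 0 < k < N. Define H : [k,∞) → ℝ by H(z) = z^β − k^β for k ≤ z ≤ N and H(z) = β N^{β−1} z + (1 − β) N^β − k^β for z > N, and define G(s) = ∫_k^s H′(z)² dz for s ≥ k. Then H is continuously differentiable on [k,∞) with bounded derivative, and for every s ≥ k one has G(s) ≤ H(s)·H′(s) and H(s) ≤ s·H′(s). -/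
open Set

/-- The piecewise function `H(z) = z^β − k^β` for `z ≤ N` and
`H(z) = β N^(β−1) z + (1−β) N^β − k^β` for `z > N`. -/
noncomputable def Hfun (k N β z : ℝ) : ℝ :=
  if z ≤ N then z ^ β - k ^ β
  else β * N ^ (β - 1) * z + (1 - β) * N ^ β - k ^ β

/-- Let `β ≥ 1` and `0 < k < N`. The piecewise function `H` is `C¹` on
`[k,∞)` with bounded derivative `H'`, and `G(s) = ∫_k^s H'(z)² dz` satisfies
`G(s) ≤ H(s)·H'(s)` and `H(s) ≤ s·H'(s)` for all `s ≥ k`. -/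
theorem Hfun_properties (k N β : ℝ) (hβ : 1 ≤ β) (hk : 0 < k) (hkN : k < N) :
    ∃ H' : ℝ → ℝ,
      ContinuousOn H' (Ici k) ∧
      (∀ z ∈ Ici k, HasDerivWithinAt (Hfun k N β) (H' z) (Ici k) z) ∧
      (∃ M : ℝ, ∀ z ∈ Ici k, |H' z| ≤ M) ∧
      (∀ s ∈ Ici k,
        (∫ z in k..s, (H' z) ^ 2) ≤ Hfun k N β s * H' s ∧
        Hfun k N β s ≤ s * H' s) := by
  have hN : 0 < N := hk.trans hkN
  have hβ0 : (0:ℝ) ≤ β - 1 := by linarith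
  set H' : ℝ → ℝ := fun z => β * (min z N) ^ (β - 1) with hH'def
  have hmin : ∀ z ∈ Ici k, 0 < min z N := fun z hz => lt_min (hk.trans_le hz) hN
  -- continuity of H'
  have hcont : ContinuousOn H' (Ici k) := by
    apply continuousOn_const.mul
    exact ((continuous_id.min continuous_const).continuousOn).rpow_const
      (fun z hz => Or.inl (hmin z hz).ne')
  -- the linear piece agrees with Hfun on Ici N
  have hNpow : N ^ (β - 1) * N = N ^ β := by
    rw [← Real.rpow_add_one hN.ne' (β - 1)]; ring_nf
  have heq2 : ∀ x ∈ Ici N, Hfun k N β x =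
      β * N ^ (β - 1) * x + (1 - β) * N ^ β - k ^ β := by
    intro x hx
    unfold Hfun
    rcases eq_or_lt_of_le (mem_Ici.mp hx) with hxN | hxN
    · rw [← hxN, if_pos le_rfl, mul_assoc, hNpow]; ring
    · rw [if_neg (not_le.mpr hxN)]
  -- derivatives of the pieces
  have h1 : ∀ z : ℝ, 0 < z → HasDerivAt (fun x => x ^ β - k ^ β) (β * z ^ (β - 1)) z :=
    fun z hz => (Real.hasDerivAt_rpow_const (Or.inl hz.ne')).sub_const _
  have h2 : ∀ z : ℝ, HasDerivAt (fun x => β * N ^ (β - 1) * x + (1 - β) * N ^ β - k ^ β)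
      (β * N ^ (β - 1)) z := by
    intro z
    have := (((hasDerivAt_id z).const_mul (β * N ^ (β - 1))).add_const
      ((1 - β) * N ^ β)).sub_const (k ^ β)
    simpa using this
  -- H' is the derivative of Hfun on Ici k
  have hder : ∀ z ∈ Ici k, HasDerivWithinAt (Hfun k N β) (H' z) (Ici k) z := by
    intro z hz
    rcases lt_trichotomy z N with hzN | hzN | hzN
    · have hz0 : 0 < z := hk.trans_le hz
      have hval : H' z = β * z ^ (β - 1) := by
        rw [hH'def]; simp [min_eq_left hzN.le]
      rw [hval]
      have hmem : Ici k ∩ Iic N ∈ nhdsWithin z (Ici k) :=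
        Filter.inter_mem self_mem_nhdsWithin
          (mem_nhdsWithin_of_mem_nhds (Iic_mem_nhds hzN))
      refine HasDerivWithinAt.mono_of_mem_nhdsWithin ?_ hmem
      refine ((h1 z hz0).hasDerivWithinAt).congr ?_ ?_
      · intro x hx; simp only [Hfun, if_pos (mem_Iic.mp hx.2)]
      · simp only [Hfun, if_pos hzN.le]
    · have hval : H' N = β * N ^ (β - 1) := by
        rw [hH'def]; simp
      rw [hzN, hval]
      have hleft : HasDerivWithinAt (Hfun k N β) (β * N ^ (β - 1)) (Iic N) N := by
        refine ((h1 N hN).hasDerivWithinAt).congr ?_ ?_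
        · intro x hx; simp only [Hfun, if_pos (mem_Iic.mp hx)]
        · simp only [Hfun, if_pos le_rfl]
      have hright : HasDerivWithinAt (Hfun k N β) (β * N ^ (β - 1)) (Ici N) N := by
        refine ((h2 N).hasDerivWithinAt).congr ?_ ?_
        · intro x hx; exact heq2 x hx
        · exact heq2 N self_mem_Ici
      have := hleft.union hright
      rw [Iic_union_Ici] at this
      exact this.mono (subset_univ _)
    · have hval : H' z = β * N ^ (β - 1) := by
        rw [hH'def]; simp [min_eq_right hzN.le]
      rw [hval]
      have hmem : Ici N ∈ nhdsWithin z (Ici k) :=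
        mem_nhdsWithin_of_mem_nhds (Ici_mem_nhds hzN)
      refine HasDerivWithinAt.mono_of_mem_nhdsWithin ?_ hmem
      exact ((h2 z).hasDerivWithinAt).congr heq2 (heq2 z (mem_Ici.mpr hzN.le))
  -- nonnegativity and monotonicity of H'
  have hβpos : (0:ℝ) < β := by linarith
  have hnonneg : ∀ z ∈ Ici k, 0 ≤ H' z := by
    intro z hz
    exact mul_nonneg hβpos.le (Real.rpow_nonneg (hmin z hz).le _)
  have hmono : ∀ a ∈ Ici k, ∀ b : ℝ, a ≤ b → H' a ≤ H' b := by
    intro a ha b hab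
    refine mul_le_mul_of_nonneg_left ?_ hβpos.le
    exact Real.rpow_le_rpow (hmin a ha).le (min_le_min hab le_rfl) hβ0
  -- Hfun k = 0
  have hHk : Hfun k N β k = 0 := by simp [Hfun, hkN.le]
  have hcontH : ContinuousOn (Hfun k N β) (Ici k) :=
    fun z hz => (hder z hz).continuousWithinAt
  -- integral identity
  have key : ∀ s ∈ Ici k, (∫ z in k..s, H' z) = Hfun k N β s := by
    intro s hs
    have hsub : Icc k s ⊆ Ici k := Icc_subset_Ici_self
    have hint : IntervalIntegrable H' MeasureTheory.volume k s := by
      exact (hcont.mono (by rw [uIcc_of_le hs]; exact hsub)).intervalIntegrable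
    rw [intervalIntegral.integral_eq_sub_of_hasDeriv_right_of_le hs
      (hcontH.mono hsub)
      (fun x hx => (hder x hx.1.le).mono (Ioi_subset_Ici_self.trans (Ici_subset_Ici.mpr hx.1.le)))
      hint, hHk, sub_zero]
  -- conclusion
  refine ⟨H', hcont, hder, ⟨β * N ^ (β - 1), ?_⟩, ?_⟩
  · intro z hz
    rw [abs_of_nonneg (hnonneg z hz)]
    exact mul_le_mul_of_nonneg_left
      (Real.rpow_le_rpow (hmin z hz).le (min_le_right _ _) hβ0) hβpos.le
  · intro s hs
    have hsub : Icc k s ⊆ Ici k := Icc_subset_Ici_self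
    have huicc : uIcc k s ⊆ Ici k := by rw [uIcc_of_le hs]; exact hsub
    have hint : IntervalIntegrable H' MeasureTheory.volume k s :=
      (hcont.mono huicc).intervalIntegrable
    have hintsq : IntervalIntegrable (fun z => (H' z) ^ 2) MeasureTheory.volume k s :=
      ((hcont.pow 2).mono huicc).intervalIntegrable
    have hint2 : IntervalIntegrable (fun z => H' s * H' z) MeasureTheory.volume k s :=
      hint.const_mul _
    constructor
    · calc (∫ z in k..s, (H' z) ^ 2) ≤ ∫ z in k..s, H' s * H' z := by
            refine intervalIntegral.integral_mono_on hs hintsq hint2 ?_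
            intro z hz
            have h1 := hmono z hz.1 s hz.2
            have h2 := hnonneg z hz.1
            nlinarith
        _ = H' s * Hfun k N β s := by
            rw [intervalIntegral.integral_const_mul, key s hs]
        _ = Hfun k N β s * H' s := mul_comm _ _
    · rw [← key s hs]
      calc (∫ z in k..s, H' z) ≤ ∫ _ in k..s, H' s := by
            refine intervalIntegral.integral_mono_on hs hint intervalIntegrable_const ?_
            intro z hz
            exact hmono z hz.1 s hz.2
        _ = (s - k) * H' s := by rw [intervalIntegral.integral_const, smul_eq_mul]
        _ ≤ s * H' s := by nlinarith [hnonneg s hs]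
end
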